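/- arXiv:2205.14680 — 4 statements merged into one kernel-verified Lean document; each statement's English description precedes it below -/
import Mathlib

section
/- Let a ≥ 1 and b ≥ 0 be integers, let G be a finite simple graph such that every subgraph G' of G satisfies |E(G')| ≤ a·|V(G')| − b, and let M be a matching of G. Then every subgraph H of the contracted graph G_M satisfies |E(H)| ≤ (2a−1)·|V(H)| − b; that is, G_M is a (2a−1, b)-graph. -/
/-!
Let `G'` be the subgraph of `G` lying over `H`: the preimages of the vertices of `H`, the edges of
`G` mapping onto edges of `H`, and the matching edges contracted onto vertices of `H`. If `s` of
the vertices of `H` arise from a matching edge, then `|V(G')| = |V(H)| + s`,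
`|E(G')| ≥ |E(H)| + s` and `s ≤ |V(H)|`, so
`|E(H)| ≤ a·|V(H)| + (a − 1)·s − b ≤ (2a − 1)·|V(H)| − b`.
Formally, `s` counts the vertices of `G'` other than the chosen representative `Quot.out` of
their class.
-/

/-- `M` is a matching of `G`, viewed as a set of edges:
all edges lie in `G` and are pairwise non-adjacent (share no vertex). -/
def IsMatchingSet {V : Type*} (G : SimpleGraph V) (M : Set (Sym2 V)) : Prop :=
  M ⊆ G.edgeSet ∧ ∀ e ∈ M, ∀ f ∈ M, e ≠ f → ∀ v : V, ¬(v ∈ e ∧ v ∈ f)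

/-- The graph obtained from `G` by contracting each edge in `M`
(identifying the endpoints of every edge of `M`, deleting loops and
merging parallel edges). -/
def Contract {V : Type*} (G : SimpleGraph V) (M : Set (Sym2 V)) :
    SimpleGraph (Quot fun u v : V => s(u, v) ∈ M) where
  Adj x y := x ≠ y ∧ ∃ u v : V, G.Adj u v ∧ Quot.mk _ u = x ∧ Quot.mk _ v = y
  symm := by
    constructor
    rintro x y ⟨hxy, u, v, huv, hu, hv⟩
    exact ⟨hxy.symm, v, u, huv.symm, hv, hu⟩
  loopless := by
    constructor
    rintro x ⟨hx, -⟩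
    exact hx rfl

theorem Set.ncard_le_ncard_image_add_ncard {α β : Type*} (f : α → β) (g : β → α)
    {s : Set α} (hs : s.Finite) :
    s.ncard ≤ (f '' s).ncard + {x ∈ s | g (f x) ≠ x}.ncard := by
  have hfix : {x ∈ s | g (f x) = x}.ncard ≤ (f '' s).ncard :=
    Set.ncard_le_ncard_of_injOn f (fun x hx => Set.mem_image_of_mem f hx.1)
      (fun x hx y hy hxy => by rw [← hx.2, ← hy.2, hxy]) (hs.image f)
  calc s.ncard ≤ ({x ∈ s | g (f x) = x} ∪ {x ∈ s | g (f x) ≠ x}).ncard :=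
        Set.ncard_le_ncard (fun x hx => (em _).imp (⟨hx, ·⟩) (⟨hx, ·⟩))
          ((hs.sep _).union (hs.sep _))
    _ ≤ _ := Set.ncard_union_le _ _
    _ ≤ _ := by omega

namespace IsMatchingSet

variable {V : Type*} {G : SimpleGraph V} {M : Set (Sym2 V)}

theorem eq_of_mem_of_mem (hM : IsMatchingSet G M) {e f : Sym2 V} (he : e ∈ M) (hf : f ∈ M)
    {v : V} (hve : v ∈ e) (hvf : v ∈ f) : e = f := by
  by_contra hef
  exact hM.2 e he f hf hef v ⟨hve, hvf⟩

theorem eq_of_mk_mem_of_mk_mem (hM : IsMatchingSet G M) {u v w : V} (huv : s(u, v) ∈ M)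
    (hvw : s(v, w) ∈ M) : u = w := by
  rcases Sym2.eq_iff.mp (hM.eq_of_mem_of_mem huv hvw (Sym2.mem_mk_right u v)
    (Sym2.mem_mk_left v w)) with ⟨rfl, rfl⟩ | ⟨rfl, -⟩ <;> rfl

end IsMatchingSet

namespace Contract

variable {V : Type*} {G : SimpleGraph V} {M : Set (Sym2 V)}

abbrev proj (M : Set (Sym2 V)) : V → Quot fun u v : V => s(u, v) ∈ M := Quot.mk _

theorem proj_eq_proj_iff (hM : IsMatchingSet G M) {u w : V} :
    proj M u = proj M w ↔ u = w ∨ s(u, w) ∈ M := by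
  refine ⟨fun h => ?_, ?_⟩
  · rw [Quot.eq] at h
    induction h with
    | rel x y hxy => exact .inr hxy
    | refl x => exact .inl rfl
    | symm x y _ ih => exact ih.imp Eq.symm (Sym2.eq_swap ▸ ·)
    | trans x y z _ _ ih₁ ih₂ =>
      rcases ih₁ with rfl | h₁
      · exact ih₂
      rcases ih₂ with rfl | h₂
      · exact .inr h₁
      · exact .inl (hM.eq_of_mk_mem_of_mk_mem h₁ h₂)
  · rintro (rfl | h)
    · rfl
    · exact Quot.sound h

theorem mk_out_proj_mem (hM : IsMatchingSet G M) {v : V} (hv : (proj M v).out ≠ v) :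
    s(v, (proj M v).out) ∈ M :=
  ((proj_eq_proj_iff hM).mp (Quot.out_eq _).symm).resolve_left hv.symm

def liftSubgraph (H : (Contract G M).Subgraph) : G.Subgraph where
  verts := proj M ⁻¹' H.verts
  Adj u v := G.Adj u v ∧
    (H.Adj (proj M u) (proj M v) ∨ proj M u = proj M v ∧ proj M u ∈ H.verts)
  adj_sub h := h.1
  edge_vert := by
    rintro u v ⟨-, h | ⟨-, h⟩⟩
    exacts [H.edge_vert h, h]
  symm := by
    constructor
    rintro u v ⟨huv, h | ⟨h, hu⟩⟩
    exacts [⟨huv.symm, .inl h.symm⟩, ⟨huv.symm, .inr ⟨h.symm, h ▸ hu⟩⟩]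

variable (H : (Contract G M).Subgraph)

theorem liftSubgraph_adj {u v : V} : (liftSubgraph H).Adj u v ↔
    G.Adj u v ∧ (H.Adj (proj M u) (proj M v) ∨ proj M u = proj M v ∧ proj M u ∈ H.verts) :=
  Iff.rfl

theorem edgeSet_subset_image_liftSubgraph :
    H.edgeSet ⊆ Sym2.map (proj M) '' ((liftSubgraph H).edgeSet \ M) := by
  intro e he
  induction e using Sym2.ind with
  | _ x y =>
    obtain ⟨hxy, u, v, huv, rfl, rfl⟩ := H.adj_sub he
    refine ⟨s(u, v), ⟨(liftSubgraph_adj H).mpr ⟨huv, .inl he⟩, ?_⟩, rfl⟩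
    exact fun h => hxy (Quot.sound h)

theorem ncard_edgeSet_add_ncard_inter_le [Finite V] :
    H.edgeSet.ncard + ((liftSubgraph H).edgeSet ∩ M).ncard ≤
      (liftSubgraph H).edgeSet.ncard := by
  have := (Set.ncard_le_ncard (edgeSet_subset_image_liftSubgraph H)).trans
    (Set.ncard_image_le (f := Sym2.map (proj M)))
  have := Set.ncard_inter_add_ncard_sdiff_eq_ncard (liftSubgraph H).edgeSet M
  omega

theorem ncard_verts_liftSubgraph_le [Finite V] :
    (liftSubgraph H).verts.ncard ≤
      H.verts.ncard + {v ∈ (liftSubgraph H).verts | (proj M v).out ≠ v}.ncard := by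
  have :=
    Set.ncard_le_ncard_image_add_ncard (proj M) Quot.out (Set.toFinite (liftSubgraph H).verts)
  have : (proj M '' (liftSubgraph H).verts).ncard ≤ H.verts.ncard :=
    Set.ncard_le_ncard (Set.image_preimage_subset _ _)
  omega

variable {H}

theorem ncard_nonrep_le_ncard_inter [Finite V] (hM : IsMatchingSet G M) :
    {v ∈ (liftSubgraph H).verts | (proj M v).out ≠ v}.ncard ≤
      ((liftSubgraph H).edgeSet ∩ M).ncard := by
  refine Set.ncard_le_ncard_of_injOn (fun v => s(v, (proj M v).out)) ?_ ?_ (Set.toFinite _)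
  · rintro v ⟨hv, hrep⟩
    have hmem := mk_out_proj_mem hM hrep
    exact ⟨(liftSubgraph_adj H).mpr ⟨hM.1 hmem, .inr ⟨(Quot.out_eq _).symm, hv⟩⟩, hmem⟩
  · rintro v ⟨-, hv⟩ w ⟨-, hw⟩ h
    rcases Sym2.eq_iff.mp h with ⟨rfl, -⟩ | ⟨rfl, hvw⟩
    · rfl
    · have : proj M (proj M w).out = proj M w := Quot.out_eq _
      exact absurd (this ▸ hvw) hw

/-- Two non-representatives of one class would both be matched to its representative. -/
theorem ncard_nonrep_le_ncard_verts [Finite V] (hM : IsMatchingSet G M) :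
    {v ∈ (liftSubgraph H).verts | (proj M v).out ≠ v}.ncard ≤ H.verts.ncard := by
  refine Set.ncard_le_ncard_of_injOn (proj M) (fun v hv => hv.1) ?_ (Set.toFinite _)
  rintro v ⟨-, hv⟩ w ⟨-, hw⟩ h
  exact Sym2.congr_left.mp <| hM.eq_of_mem_of_mem (mk_out_proj_mem hM hv)
    (h ▸ mk_out_proj_mem hM hw) (Sym2.mem_mk_right _ _) (Sym2.mem_mk_right _ _)

theorem exists_ncard_liftSubgraph_bounds [Finite V] (hM : IsMatchingSet G M) :
    ∃ s, H.edgeSet.ncard + s ≤ (liftSubgraph H).edgeSet.ncard ∧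
      (liftSubgraph H).verts.ncard ≤ H.verts.ncard + s ∧ s ≤ H.verts.ncard := by
  refine ⟨_, ?_, ncard_verts_liftSubgraph_le H, ncard_nonrep_le_ncard_verts hM⟩
  exact (Nat.add_le_add_left (ncard_nonrep_le_ncard_inter hM) _).trans
    (ncard_edgeSet_add_ncard_inter_le H)

end Contract

open Contract in
theorem stmt_0_general {V : Type*} [Fintype V] (G : SimpleGraph V) (a b : ℤ)
    (ha : 1 ≤ a)
    (hG : ∀ G' : G.Subgraph, G'.verts.Nonempty →
      (G'.edgeSet.ncard : ℤ) ≤ a * (G'.verts.ncard : ℤ) - b)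
    (M : Set (Sym2 V)) (hM : IsMatchingSet G M) :
    ∀ H : (Contract G M).Subgraph, H.verts.Nonempty →
      (H.edgeSet.ncard : ℤ) ≤ (2 * a - 1) * (H.verts.ncard : ℤ) - b := by
  intro H hH
  have hlift := hG (liftSubgraph H) (hH.preimage Quot.mk_surjective)
  obtain ⟨s, hE, hV, hs⟩ := exists_ncard_liftSubgraph_bounds hM
  have hV' : a * (liftSubgraph H).verts.ncard ≤ a * (H.verts.ncard + s) :=
    mul_le_mul_of_nonneg_left (by exact_mod_cast hV) (by linarith)
  have hs' : (a - 1) * s ≤ (a - 1) * H.verts.ncard :=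
    mul_le_mul_of_nonneg_left (by exact_mod_cast hs) (by linarith)
  have hE' : (H.edgeSet.ncard : ℤ) + s ≤ (liftSubgraph H).edgeSet.ncard := by exact_mod_cast hE
  linarith

/-- If every (nonempty) subgraph `G'` of `G` satisfies `|E(G')| ≤ a·|V(G')| − b`
(with `a ≥ 1`, `b ≥ 0`), and `M` is a matching of `G`, then every (nonempty)
subgraph `H` of the contracted graph `G_M` satisfies
`|E(H)| ≤ (2a−1)·|V(H)| − b`. -/
theorem stmt_0 {V : Type*} [Fintype V] (G : SimpleGraph V) (a b : ℤ)
    (ha : 1 ≤ a) (hb : 0 ≤ b)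
    (hG : ∀ G' : G.Subgraph, G'.verts.Nonempty →
      (G'.edgeSet.ncard : ℤ) ≤ a * (G'.verts.ncard : ℤ) - b)
    (M : Set (Sym2 V)) (hM : IsMatchingSet G M) :
    ∀ H : (Contract G M).Subgraph, H.verts.Nonempty →
      (H.edgeSet.ncard : ℤ) ≤ (2 * a - 1) * (H.verts.ncard : ℤ) - b :=
  stmt_0_general G a b ha hG M hM
end

section
/- Let a ≥ 1 be an integer, let G be a finite simple graph such that every subgraph G' of G satisfies |E(G')| ≤ a·|V(G')|, and let M be a matching of G. Then the contracted graph G_M is (4a−2)-degenerate, i.e., every nonempty subgraph of G_M contains a vertex of degree at most 4a−2. -/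
open Set SimpleGraph

section

variable {V : Type*} {G : SimpleGraph V} {M : Set (Sym2 V)}

local notation "π" => Quot.mk (fun u v : V => s(u, v) ∈ M)

theorem IsMatchingSet.eq_of_mem_of_mem_s2 (hM : IsMatchingSet G M) {e f : Sym2 V} {v : V}
    (he : e ∈ M) (hf : f ∈ M) (hve : v ∈ e) (hvf : v ∈ f) : e = f := by
  by_contra hne
  exact hM.2 e he f hf hne v ⟨hve, hvf⟩

theorem IsMatchingSet.quot_mk_eq_iff (hM : IsMatchingSet G M) {u v : V} :
    π u = π v ↔ u = v ∨ s(u, v) ∈ M := by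
  have hequiv : Equivalence fun u v : V => u = v ∨ s(u, v) ∈ M := by
    refine ⟨fun _ => Or.inl rfl, ?_, ?_⟩
    · rintro x y (rfl | h)
      · exact Or.inl rfl
      · exact Or.inr (Sym2.eq_swap ▸ h)
    · rintro x y z (rfl | hxy) (rfl | hyz)
      · exact Or.inl rfl
      · exact Or.inr hyz
      · exact Or.inr hxy
      · have := hM.eq_of_mem_of_mem_s2 hxy hyz (Sym2.mem_mk_right x y) (Sym2.mem_mk_left y z)
        left
        rcases Sym2.eq_iff.1 this with ⟨rfl, rfl⟩ | ⟨rfl, -⟩ <;> rfl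
  refine ⟨fun h => hequiv.eqvGen_iff.1 (Relation.EqvGen.mono (fun _ _ => Or.inr) _ _
    (Quot.eqvGen_exact h)), ?_⟩
  rintro (rfl | h)
  · rfl
  · exact Quot.sound h

theorem IsMatchingSet.eq_of_quot_mk_eq (hM : IsMatchingSet G M) {e f : Sym2 V} {u w : V}
    (he : e ∈ M) (hf : f ∈ M) (hu : u ∈ e) (hw : w ∈ f) (h : π u = π w) : e = f := by
  rcases hM.quot_mk_eq_iff.1 h with rfl | huw
  · exact hM.eq_of_mem_of_mem_s2 he hf hu hw
  · exact (hM.eq_of_mem_of_mem_s2 he huw hu (Sym2.mem_mk_left u w)).trans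
      (hM.eq_of_mem_of_mem_s2 hf huw hw (Sym2.mem_mk_right u w)).symm

theorem IsMatchingSet.ncard_inter_sym2_le_ncard_image [Finite V] (hM : IsMatchingSet G M)
    (X : Set V) : (M ∩ X.sym2).ncard ≤ (π '' X).ncard :=
  ncard_le_ncard_of_injOn (fun e => π e.out.1)
    (fun e he => ⟨_, mem_sym2_iff_subset.1 he.2 e.out_fst_mem, rfl⟩)
    (fun _ he _ hf h => hM.eq_of_quot_mk_eq he.1 hf.1 (Sym2.out_fst_mem _) (Sym2.out_fst_mem _) h)
    (toFinite _)

theorem IsMatchingSet.ncard_le_ncard_image_add [Finite V] (hM : IsMatchingSet G M)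
    (X : Set V) : X.ncard ≤ (π '' X).ncard + (M ∩ X.sym2).ncard := by
  -- dropping one endpoint of each matching edge inside `X` makes `π` injective
  set Y := (fun e : Sym2 V => e.out.2) '' (M ∩ X.sym2)
  have hinj : InjOn π (X \ Y) := by
    intro u hu v hv h
    by_contra huv
    have hmem : s(u, v) ∈ M ∩ X.sym2 :=
      ⟨(hM.quot_mk_eq_iff.1 h).resolve_left huv, hu.1, hv.1⟩
    rcases Sym2.mem_iff.1 (Sym2.out_snd_mem s(u, v)) with hout | hout
    · exact hu.2 ⟨_, hmem, hout⟩
    · exact hv.2 ⟨_, hmem, hout⟩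
  calc X.ncard ≤ (X \ Y).ncard + Y.ncard := ncard_le_ncard_sdiff_add_ncard X Y
    _ = (π '' (X \ Y)).ncard + Y.ncard := by rw [hinj.ncard_image]
    _ ≤ (π '' X).ncard + (M ∩ X.sym2).ncard :=
      add_le_add (ncard_le_ncard (image_mono sdiff_subset)) (ncard_image_le (toFinite _))

theorem ncard_edgeSet_add_ncard_le_ncard_edgeSet_induce [Finite V] (hMG : M ⊆ G.edgeSet)
    (H : (Contract G M).Subgraph) :
    H.edgeSet.ncard + (M ∩ (π ⁻¹' H.verts).sym2).ncard ≤
      ((⊤ : G.Subgraph).induce (π ⁻¹' H.verts)).edgeSet.ncard := by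
  set E' := ((⊤ : G.Subgraph).induce (π ⁻¹' H.verts)).edgeSet
  have hlift : H.edgeSet ⊆ Sym2.map π '' (E' \ M) := by
    rintro ⟨x, y⟩ hxy
    obtain ⟨hne, u, v, huv, rfl, rfl⟩ := H.adj_sub hxy
    exact ⟨s(u, v), ⟨⟨H.edge_vert hxy, H.edge_vert hxy.symm, huv⟩, fun h => hne (Quot.sound h)⟩,
      rfl⟩
  have hmatch : M ∩ (π ⁻¹' H.verts).sym2 ⊆ E' ∩ M := by
    rintro ⟨u, v⟩ ⟨huvM, hu, hv⟩
    exact ⟨⟨hu, hv, hMG huvM⟩, huvM⟩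
  calc H.edgeSet.ncard + (M ∩ (π ⁻¹' H.verts).sym2).ncard ≤ (E' \ M).ncard + (E' ∩ M).ncard :=
        add_le_add ((ncard_le_ncard hlift).trans (ncard_image_le (toFinite _)))
          (ncard_le_ncard hmatch)
    _ = E'.ncard := by rw [add_comm, ncard_inter_add_ncard_sdiff_eq_ncard]

theorem IsMatchingSet.ncard_edgeSet_subgraph_contract_le [Finite V] {a : ℤ} (ha : 1 ≤ a)
    (hG : ∀ G' : G.Subgraph, (G'.edgeSet.ncard : ℤ) ≤ a * G'.verts.ncard)
    (hM : IsMatchingSet G M) (H : (Contract G M).Subgraph) :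
    (H.edgeSet.ncard : ℤ) ≤ (2 * a - 1) * H.verts.ncard := by
  set X := π ⁻¹' H.verts
  have hE := ncard_edgeSet_add_ncard_le_ncard_edgeSet_induce hM.1 H
  have hG' := hG ((⊤ : G.Subgraph).induce X)
  have hX := hM.ncard_le_ncard_image_add X
  have hB := hM.ncard_inter_sym2_le_ncard_image X
  have hS : (π '' X).ncard ≤ H.verts.ncard := ncard_le_ncard (image_preimage_subset _ _)
  simp only [Subgraph.induce_verts] at hG'
  zify at hE hX hB hS
  nlinarith

end

theorem SimpleGraph.Subgraph.sum_ncard_neighborSet {W : Type*} {G : SimpleGraph W} [Fintype W]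
    (H : G.Subgraph) : ∑ v, (H.neighborSet v).ncard = 2 * H.edgeSet.ncard := by
  classical
  rw [← H.edgeSet_spanningCoe, ← coe_edgeFinset, ncard_coe_finset,
    ← sum_degrees_eq_twice_card_edges]
  refine Finset.sum_congr rfl fun v _ => ?_
  rw [← card_neighborFinset_eq_degree, ← ncard_coe_finset, coe_neighborFinset]
  rfl

theorem SimpleGraph.Subgraph.exists_ncard_neighborSet_le {W : Type*} {G : SimpleGraph W}
    [Finite W] {H : G.Subgraph} (hne : H.verts.Nonempty) {d : ℤ}
    (h : 2 * (H.edgeSet.ncard : ℤ) ≤ d * H.verts.ncard) :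
    ∃ v ∈ H.verts, ((H.neighborSet v).ncard : ℤ) ≤ d := by
  classical
  have := Fintype.ofFinite W
  have hsum : ∑ v ∈ H.verts.toFinset, ((H.neighborSet v).ncard : ℤ) = 2 * H.edgeSet.ncard := by
    rw [Finset.sum_subset (Finset.subset_univ _)]
    · exact_mod_cast H.sum_ncard_neighborSet
    · intro v _ hv
      have : H.neighborSet v = ∅ :=
        eq_empty_of_forall_notMem fun _ hw => mem_toFinset.not.1 hv (H.edge_vert hw)
      simp [this]
  obtain ⟨v, hv, hle⟩ := Finset.exists_le_of_sum_le (toFinset_nonempty.2 hne) (g := fun _ => d)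
    (by rw [hsum, Finset.sum_const, nsmul_eq_mul, ← ncard_eq_toFinset_card', mul_comm _ d]; exact h)
  exact ⟨v, mem_toFinset.1 hv, hle⟩

/-- If every subgraph `G'` of `G` satisfies `|E(G')| ≤ a·|V(G')|` (with `a ≥ 1`),
and `M` is a matching of `G`, then the contracted graph `G_M` is
`(4a−2)`-degenerate: every nonempty subgraph of `G_M` contains a vertex of
degree at most `4a−2`. -/
theorem stmt_2 {V : Type*} [Fintype V] (G : SimpleGraph V) (a : ℤ) (ha : 1 ≤ a)
    (hG : ∀ G' : G.Subgraph, (G'.edgeSet.ncard : ℤ) ≤ a * (G'.verts.ncard : ℤ))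
    (M : Set (Sym2 V)) (hM : IsMatchingSet G M) :
    ∀ H : (Contract G M).Subgraph, H.verts.Nonempty →
      ∃ v ∈ H.verts, ((H.neighborSet v).ncard : ℤ) ≤ 4 * a - 2 := fun H hne =>
  H.exists_ncard_neighborSet_le hne (by linarith [hM.ncard_edgeSet_subgraph_contract_le ha hG H])
end

section
/- Let a ≥ 1 and b ≥ 1 be integers and let G be a finite simple (a,b)-graph, i.e., every subgraph H of G satisfies |E(H)| ≤ a·|V(H)| − b. Then χ'_s(G) ≤ (4a − 2)·χ'(G), where χ'_s(G) is the strong chromatic index and χ'(G) is the chromatic index of G. -/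
/-- Two edges of `G` are at distance at most 2: they share a vertex, or some
edge of `G` shares a vertex with each of them. -/
def NearEdges {V : Type*} (G : SimpleGraph V) (e f : Sym2 V) : Prop :=
  (∃ v, v ∈ e ∧ v ∈ f) ∨ ∃ g ∈ G.edgeSet, (∃ v, v ∈ e ∧ v ∈ g) ∧ (∃ v, v ∈ g ∧ v ∈ f)

/-- A proper edge coloring of `G`: any two distinct adjacent edges receive
distinct colors. -/
def IsProperEdgeColoring {V : Type*} (G : SimpleGraph V) (c : Sym2 V → ℕ) : Prop :=
  ∀ e ∈ G.edgeSet, ∀ f ∈ G.edgeSet, e ≠ f → (∃ v, v ∈ e ∧ v ∈ f) → c e ≠ c f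

/-- A strong edge coloring of `G`: any two distinct edges at distance at most 2
receive distinct colors. -/
def IsStrongEdgeColoring {V : Type*} (G : SimpleGraph V) (c : Sym2 V → ℕ) : Prop :=
  ∀ e ∈ G.edgeSet, ∀ f ∈ G.edgeSet, e ≠ f → NearEdges G e f → c e ≠ c f

/-- The chromatic index `χ'(G)`: the least `k` such that `G` admits a proper
edge coloring using colors `{0, …, k−1}`. -/
noncomputable def chromIndex {V : Type*} (G : SimpleGraph V) : ℕ :=
  sInf {k : ℕ | ∃ c : Sym2 V → ℕ, (∀ e ∈ G.edgeSet, c e < k) ∧ IsProperEdgeColoring G c}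

/-- The strong chromatic index `χ'ₛ(G)`: the least `k` such that `G` admits a
strong edge coloring using colors `{0, …, k−1}`. -/
noncomputable def strongChromIndex {V : Type*} (G : SimpleGraph V) : ℕ :=
  sInf {k : ℕ | ∃ c : Sym2 V → ℕ, (∀ e ∈ G.edgeSet, c e < k) ∧ IsStrongEdgeColoring G c}


/-!
Fix a proper edge colouring with `χ'(G)` colours; every colour class is a matching. For a
matching `M`, two of its edges at distance at most 2 are joined by an edge of `G`, and the ordered
pair of matching edges is recovered from the corresponding dart, because each vertex lies on at most
one edge of `M`. In the subgraph `H` induced on the `≤ 2|M|` vertices covered by `M`, the darts not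
lying on `M` therefore bound the number of conflicts in `M` by
`2|E(H)| - 2|M| ≤ 2(2a|M| - b) - 2|M| < (4a - 2)|M|`. So every nonempty set of equally coloured
edges has an edge with fewer than `4a - 2` conflicts in it, and greedily colouring each class with
`4a - 2` colours in that order, then pairing the two colourings, gives a strong edge colouring.
-/

open Finset Classical

section Greedy

variable {α : Type*} [DecidableEq α] {R : α → α → Prop} [DecidableRel R]

theorem exists_coloring_of_forall_exists_card_lt (hR : ∀ x y, R x y → R y x) (n : ℕ) (S : Finset α)
    (hS : ∀ T ⊆ S, T.Nonempty → ∃ x ∈ T, #{y ∈ T.erase x | R x y} < n) :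
    ∃ c : α → ℕ, (∀ x ∈ S, c x < n) ∧ ∀ x ∈ S, ∀ y ∈ S, x ≠ y → R x y → c x ≠ c y := by
  induction S using Finset.strongInduction with
  | H S ih =>
  rcases S.eq_empty_or_nonempty with rfl | hne
  · exact ⟨fun _ ↦ 0, by simp, by simp⟩
  obtain ⟨x, hx, hdeg⟩ := hS S subset_rfl hne
  obtain ⟨c, hc_lt, hc⟩ :=
    ih (S.erase x) (erase_ssubset hx) fun T hT ↦ hS T (hT.trans (erase_subset x S))
  obtain ⟨j, hj, hj_free⟩ : ∃ j ∈ range n, j ∉ image c {y ∈ S.erase x | R x y} :=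
    exists_mem_notMem_of_card_lt_card (card_image_le.trans_lt (by rwa [card_range]))
  have hfree : ∀ y ∈ S.erase x, R x y → c y ≠ j := fun y hy hxy h ↦
    hj_free (mem_image.2 ⟨y, mem_filter.2 ⟨hy, hxy⟩, h⟩)
  refine ⟨Function.update c x j, fun y hy ↦ ?_, fun y hy z hz hyz hyzR ↦ ?_⟩
  · rcases eq_or_ne y x with rfl | hyx
    · simpa using hj
    · simpa [hyx] using hc_lt y (mem_erase.2 ⟨hyx, hy⟩)
  · rcases eq_or_ne y x with rfl | hyx
    · simpa [hyz.symm] using (hfree z (mem_erase.2 ⟨hyz.symm, hz⟩) hyzR).symm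
    rcases eq_or_ne z x with rfl | hzx
    · simpa [hyx] using hfree y (mem_erase.2 ⟨hyx, hy⟩) (hR _ _ hyzR)
    · simpa [hyx, hzx] using hc y (mem_erase.2 ⟨hyx, hy⟩) z (mem_erase.2 ⟨hzx, hz⟩) hyz hyzR

end Greedy

section EdgeColoring

variable {V : Type*} {G : SimpleGraph V}

theorem NearEdges.symm {e f : Sym2 V} (h : NearEdges G e f) : NearEdges G f e := by
  rcases h with ⟨v, hve, hvf⟩ | ⟨g, hg, ⟨u, hue, hug⟩, ⟨v, hvg, hvf⟩⟩
  · exact .inl ⟨v, hvf, hve⟩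
  · exact .inr ⟨g, hg, ⟨v, hvf, hvg⟩, ⟨u, hug, hue⟩⟩

theorem NearEdges.exists_adj {e f : Sym2 V} (h : NearEdges G e f) (hef : ∀ v ∈ e, v ∉ f) :
    ∃ u ∈ e, ∃ v ∈ f, G.Adj u v := by
  rcases h with ⟨v, hve, hvf⟩ | ⟨g, hg, ⟨u, hue, hug⟩, ⟨v, hvg, hvf⟩⟩
  · exact absurd hvf (hef v hve)
  · have huv : u ≠ v := by rintro rfl; exact hef u hue hvf
    rw [(Sym2.mem_and_mem_iff huv).1 ⟨hug, hvg⟩] at hg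
    exact ⟨u, hue, v, hvf, hg⟩

theorem SimpleGraph.card_filter_dart_edge_mem [Fintype V] [Fintype G.Dart]
    {S : Finset (Sym2 V)} (hS : ↑S ⊆ G.edgeSet) : #{d : G.Dart | d.edge ∈ S} = 2 * #S := by
  rw [card_eq_sum_card_fiberwise (f := SimpleGraph.Dart.edge) (t := S)
    (fun d hd ↦ by simpa using hd), mul_comm, ← smul_eq_mul, ← sum_const]
  refine sum_congr rfl fun e he ↦ ?_
  rw [filter_filter, ← G.dart_edge_fiber_card e (hS he)]
  congr 1
  ext d
  simp only [mem_filter, mem_univ, true_and, and_iff_right_iff_imp]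
  rintro rfl
  exact he

def coveredSubgraph (G : SimpleGraph V) (T : Finset (Sym2 V)) : G.Subgraph :=
  (⊤ : G.Subgraph).induce ↑(T.biUnion Sym2.toFinset)

theorem ncard_verts_coveredSubgraph_le (T : Finset (Sym2 V)) :
    (coveredSubgraph G T).verts.ncard ≤ 2 * #T := by
  rw [coveredSubgraph, SimpleGraph.Subgraph.induce_verts, Set.ncard_coe_finset]
  calc _ ≤ ∑ e ∈ T, #e.toFinset := card_biUnion_le
    _ ≤ ∑ _e ∈ T, 2 := sum_le_sum fun e _ ↦ by rw [Sym2.card_toFinset]; split_ifs <;> omega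
    _ = 2 * #T := by rw [sum_const, smul_eq_mul, mul_comm]

theorem coveredSubgraph_adj {T : Finset (Sym2 V)} {e f : Sym2 V} (he : e ∈ T) (hf : f ∈ T)
    {u v : V} (hu : u ∈ e) (hv : v ∈ f) (huv : G.Adj u v) : (coveredSubgraph G T).Adj u v :=
  ⟨mem_biUnion.2 ⟨e, he, Sym2.mem_toFinset.2 hu⟩, mem_biUnion.2 ⟨f, hf, Sym2.mem_toFinset.2 hv⟩,
    huv⟩

theorem sum_card_nearEdges_le_card_dart [Fintype V] {T : Finset (Sym2 V)}
    (hM : ∀ e ∈ T, ∀ f ∈ T, ∀ v ∈ e, v ∈ f → e = f) :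
    ∑ e ∈ T, #{f ∈ T.erase e | NearEdges G e f} ≤
      #{d : (coveredSubgraph G T).spanningCoe.Dart | d.edge ∉ T} := by
  rw [← card_sigma]
  refine card_le_card_of_forall_subsingleton (fun p d ↦ d.fst ∈ p.1 ∧ d.snd ∈ p.2) ?_ ?_
  · rintro ⟨e, f⟩ hp
    obtain ⟨he, hfe, hf, hnear⟩ : e ∈ T ∧ f ≠ e ∧ f ∈ T ∧ NearEdges G e f := by
      simpa [and_assoc] using hp
    obtain ⟨u, hu, v, hv, huv⟩ :=
      hnear.exists_adj fun w hwe hwf ↦ hfe (hM e he f hf w hwe hwf).symm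
    refine ⟨⟨(u, v), coveredSubgraph_adj he hf hu hv huv⟩, ?_, hu, hv⟩
    simp only [mem_filter, mem_univ, true_and]
    intro huvT
    exact hfe ((hM _ huvT f hf v (Sym2.mem_mk_right u v) hv).symm.trans
      (hM _ huvT e he u (Sym2.mem_mk_left u v) hu))
  · rintro d - ⟨e, f⟩ ⟨hp, hue, hvf⟩ ⟨e', f'⟩ ⟨hp', hue', hvf'⟩
    simp only [mem_sigma, mem_filter, mem_erase] at hp hp'
    obtain rfl := hM e hp.1 e' hp'.1 _ hue hue'
    obtain rfl := hM f hp.2.1.2 f' hp'.2.1.2 _ hvf hvf'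
    rfl

theorem sum_card_nearEdges_add_two_mul_card_le [Fintype V] {T : Finset (Sym2 V)}
    (hT : ↑T ⊆ G.edgeSet) (hM : ∀ e ∈ T, ∀ f ∈ T, ∀ v ∈ e, v ∈ f → e = f) :
    ∑ e ∈ T, #{f ∈ T.erase e | NearEdges G e f} + 2 * #T ≤
      2 * (coveredSubgraph G T).edgeSet.ncard := by
  have hconflicts := sum_card_nearEdges_le_card_dart (G := G) hM
  set K := (coveredSubgraph G T).spanningCoe
  have hTK : ↑T ⊆ K.edgeSet := by
    rintro ⟨x, y⟩ he
    exact coveredSubgraph_adj he he (Sym2.mem_mk_left x y) (Sym2.mem_mk_right x y) (hT he)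
  have hE : (coveredSubgraph G T).edgeSet.ncard = #K.edgeFinset := by
    rw [← SimpleGraph.Subgraph.edgeSet_spanningCoe, ← K.coe_edgeFinset, Set.ncard_coe_finset]
  have hsplit : #{d : K.Dart | d.edge ∈ T} + #{d : K.Dart | d.edge ∉ T} = Fintype.card K.Dart := by
    rw [← card_univ]
    exact card_filter_add_card_filter_not _
  rw [K.dart_card_eq_twice_card_edges, K.card_filter_dart_edge_mem hTK] at hsplit
  omega

theorem exists_card_nearEdges_lt_of_matching [Fintype V] {a b : ℕ} (hb : 1 ≤ b)
    (hG : ∀ H : G.Subgraph, H.verts.Nonempty →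
      (H.edgeSet.ncard : ℤ) ≤ (a : ℤ) * (H.verts.ncard : ℤ) - (b : ℤ))
    {T : Finset (Sym2 V)} (hT : ↑T ⊆ G.edgeSet) (hM : ∀ e ∈ T, ∀ f ∈ T, ∀ v ∈ e, v ∈ f → e = f)
    (hne : T.Nonempty) : ∃ e ∈ T, #{f ∈ T.erase e | NearEdges G e f} < 4 * a - 2 := by
  obtain ⟨⟨x, y⟩, hxy⟩ := hne
  have hsparse := hG (coveredSubgraph G T)
    ⟨x, mem_biUnion.2 ⟨_, hxy, Sym2.mem_toFinset.2 (Sym2.mem_mk_left x y)⟩⟩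
  have hsum := sum_card_nearEdges_add_two_mul_card_le hT hM
  have hverts := ncard_verts_coveredSubgraph_le (G := G) T
  apply exists_lt_of_sum_lt
  rw [sum_const, smul_eq_mul]
  set s := ∑ e ∈ T, #{f ∈ T.erase e | NearEdges G e f}
  have hkey : (s : ℤ) + 2 * #T + 2 * b ≤ 4 * a * #T := by
    have : (a : ℤ) * (coveredSubgraph G T).verts.ncard ≤ a * (2 * #T) :=
      mul_le_mul_of_nonneg_left (by exact_mod_cast hverts) (by positivity)
    linarith
  -- `4 * a - 2` is truncated subtraction; `hkey` rules out `a = 0`.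
  have ha : 1 ≤ a := by
    by_contra! ha
    simp only [Nat.lt_one_iff.1 ha, Nat.cast_zero, mul_zero, zero_mul] at hkey
    omega
  zify [show 2 ≤ 4 * a by omega] at hkey ⊢
  nlinarith

theorem exists_card_nearEdges_lt_of_isProperEdgeColoring [Fintype V] {a b : ℕ} (hb : 1 ≤ b)
    (hG : ∀ H : G.Subgraph, H.verts.Nonempty →
      (H.edgeSet.ncard : ℤ) ≤ (a : ℤ) * (H.verts.ncard : ℤ) - (b : ℤ))
    {c : Sym2 V → ℕ} (hc : IsProperEdgeColoring G c) {T : Finset (Sym2 V)}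
    (hT : ↑T ⊆ G.edgeSet) (hne : T.Nonempty) :
    ∃ e ∈ T, #{f ∈ T.erase e | c e = c f ∧ NearEdges G e f} < 4 * a - 2 := by
  obtain ⟨e₀, he₀⟩ := hne
  set M := {f ∈ T | c f = c e₀}
  have hMT : M ⊆ T := filter_subset _ T
  have hM : ∀ e ∈ M, ∀ f ∈ M, ∀ v ∈ e, v ∈ f → e = f := by
    intro e he f hf v hve hvf
    by_contra hef
    exact hc e (hT (hMT he)) f (hT (hMT hf)) hef ⟨v, hve, hvf⟩
      ((mem_filter.1 he).2.trans (mem_filter.1 hf).2.symm)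
  obtain ⟨e, heM, hlt⟩ :=
    exists_card_nearEdges_lt_of_matching hb hG ((coe_subset.2 hMT).trans hT) hM ⟨e₀, mem_filter.2 ⟨he₀, rfl⟩⟩
  refine ⟨e, hMT heM, lt_of_le_of_lt (card_le_card fun f hf ↦ ?_) hlt⟩
  obtain ⟨hfe, hfT⟩ := mem_erase.1 (mem_filter.1 hf).1
  obtain ⟨hcf, hnear⟩ := (mem_filter.1 hf).2
  exact mem_filter.2 ⟨mem_erase.2 ⟨hfe, mem_filter.2 ⟨hfT, hcf ▸ (mem_filter.1 heM).2⟩⟩, hnear⟩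

theorem exists_isProperEdgeColoring_lt_chromIndex [Fintype V] (G : SimpleGraph V) :
    ∃ c : Sym2 V → ℕ, (∀ e ∈ G.edgeSet, c e < chromIndex G) ∧ IsProperEdgeColoring G c := by
  refine Nat.sInf_mem (s := {k | ∃ c : Sym2 V → ℕ, (∀ e ∈ G.edgeSet, c e < k) ∧
    IsProperEdgeColoring G c}) ⟨Fintype.card (Sym2 V), fun e ↦ Fintype.equivFin (Sym2 V) e,
    fun e _ ↦ (Fintype.equivFin _ e).isLt,
    fun _ _ _ _ hef _ h ↦ hef ((Fintype.equivFin _).injective (Fin.val_injective h))⟩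

theorem strongChromIndex_le_mul {c s : Sym2 V → ℕ} {k n : ℕ} (hc : ∀ e ∈ G.edgeSet, c e < k)
    (hs : ∀ e ∈ G.edgeSet, s e < n)
    (hcs : ∀ e ∈ G.edgeSet, ∀ f ∈ G.edgeSet, e ≠ f → NearEdges G e f → c e = c f → s e ≠ s f) :
    strongChromIndex G ≤ n * k := by
  refine Nat.sInf_le ⟨fun e ↦ n * c e + s e, fun e he ↦ ?_, fun e he f hf hef hnear heq ↦ ?_⟩
  · calc n * c e + s e < n * (c e + 1) := by rw [mul_add_one]; exact Nat.add_lt_add_left (hs e he) _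
      _ ≤ n * k := Nat.mul_le_mul_left n (hc e he)
  · have hn : 0 < n := (Nat.zero_le _).trans_lt (hs e he)
    have hc_eq : c e = c f := by
      simpa [Nat.mul_add_div hn, Nat.div_eq_of_lt (hs e he), Nat.div_eq_of_lt (hs f hf)]
        using congrArg (· / n) heq
    exact hcs e he f hf hef hnear hc_eq (by simpa [hc_eq] using heq)

end EdgeColoring

theorem stmt_12_general {V : Type*} [Fintype V] (G : SimpleGraph V) (a b : ℕ)
    (hb : 1 ≤ b)
    (hG : ∀ H : G.Subgraph, H.verts.Nonempty →
      (H.edgeSet.ncard : ℤ) ≤ (a : ℤ) * (H.verts.ncard : ℤ) - (b : ℤ)) :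
    strongChromIndex G ≤ (4 * a - 2) * chromIndex G := by
  obtain ⟨c, hc_lt, hc⟩ := exists_isProperEdgeColoring_lt_chromIndex G
  obtain ⟨s, hs_lt, hs⟩ := exists_coloring_of_forall_exists_card_lt
    (R := fun e f ↦ c e = c f ∧ NearEdges G e f) (fun _ _ h ↦ ⟨h.1.symm, h.2.symm⟩)
    (4 * a - 2) G.edgeFinset fun T hT hne ↦
      exists_card_nearEdges_lt_of_isProperEdgeColoring hb hG hc (by simpa using coe_subset.2 hT) hne
  refine strongChromIndex_le_mul hc_lt (fun e he ↦ hs_lt e (by simpa using he))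
    fun e he f hf hef hnear hcef ↦ hs e (by simpa using he) f (by simpa using hf) hef ⟨hcef, hnear⟩

/-- If `G` is an `(a,b)`-graph with `a ≥ 1`, `b ≥ 1` (every nonempty subgraph
`H` satisfies `|E(H)| ≤ a·|V(H)| − b`), then `χ'ₛ(G) ≤ (4a − 2)·χ'(G)`. -/
theorem stmt_12 {V : Type*} [Fintype V] (G : SimpleGraph V) (a b : ℕ)
    (ha : 1 ≤ a) (hb : 1 ≤ b)
    (hG : ∀ H : G.Subgraph, H.verts.Nonempty →
      (H.edgeSet.ncard : ℤ) ≤ (a : ℤ) * (H.verts.ncard : ℤ) - (b : ℤ)) :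
    strongChromIndex G ≤ (4 * a - 2) * chromIndex G :=
  stmt_12_general G a b hb hG
end

section
/- For every integer Δ ≥ 4, let H_Δ be the graph obtained from the complete graph K_5 by attaching Δ − 4 new pendant vertices (vertices of degree 1) to each of the five vertices of K_5. Then H_Δ has maximum degree Δ, any two edges of H_Δ are at distance at most 2 from each other, and consequently χ'_s(H_Δ) = |E(H_Δ)| = 5Δ − 10. -/
/-- The graph `H_Δ` obtained from the complete graph `K₅` (on `Fin 5`) by
attaching `Δ − 4` new pendant vertices to each of its five vertices:
the pendant vertex `(i, t)` is joined precisely to the vertex `i` of `K₅`. -/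
def HGraph (Δ : ℕ) : SimpleGraph (Fin 5 ⊕ Fin 5 × Fin (Δ - 4)) :=
  SimpleGraph.fromRel fun x y =>
    (∃ i j : Fin 5, x = Sum.inl i ∧ y = Sum.inl j) ∨
    (∃ i : Fin 5, ∃ p : Fin 5 × Fin (Δ - 4), x = Sum.inl i ∧ y = Sum.inr p ∧ p.1 = i)

/-!
Every edge of `H_Δ` has an endpoint in the `K₅`, and any two vertices of the `K₅` are equal or
adjacent, so any two edges are at distance at most 2. A strong edge coloring therefore has to be
injective on the edges, which makes `χ'ₛ(H_Δ)` the number of edges; the handshake lemma with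
degrees `Δ` on the `K₅` and `1` on the pendant vertices gives `5Δ + 5(Δ - 4) = 2 |E(H_Δ)|`.
-/

section StrongChromaticIndex

variable {V : Type*} {G : SimpleGraph V}

theorem nearEdges_of_isClique {S : Set V} (hS : G.IsClique S)
    (hmeet : ∀ e ∈ G.edgeSet, ∃ v ∈ S, v ∈ e) {e f : Sym2 V}
    (he : e ∈ G.edgeSet) (hf : f ∈ G.edgeSet) : NearEdges G e f := by
  obtain ⟨u, huS, hue⟩ := hmeet e he
  obtain ⟨v, hvS, hvf⟩ := hmeet f hf
  by_cases huv : u = v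
  · exact Or.inl ⟨u, hue, huv ▸ hvf⟩
  · exact Or.inr ⟨s(u, v), hS huS hvS huv, ⟨u, hue, Sym2.mem_mk_left u v⟩,
      ⟨v, Sym2.mem_mk_right u v, hvf⟩⟩

theorem exists_isStrongEdgeColoring_lt_ncard (hfin : G.edgeSet.Finite) :
    ∃ c : Sym2 V → ℕ, (∀ e ∈ G.edgeSet, c e < G.edgeSet.ncard) ∧ IsStrongEdgeColoring G c := by
  classical
  have := hfin.to_subtype
  let idx : G.edgeSet ≃ Fin G.edgeSet.ncard :=
    (Finite.equivFin _).trans (finCongr (Nat.card_coe_set_eq _))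
  let c : Sym2 V → ℕ := fun e => if h : e ∈ G.edgeSet then idx ⟨e, h⟩ else 0
  refine ⟨c, fun e he => ?_, fun e he f hf hef _ hc => hef ?_⟩
  · simp only [c, dif_pos he, Fin.is_lt]
  · simp only [c, dif_pos he, dif_pos hf, Fin.val_inj, idx.apply_eq_iff_eq] at hc
    exact congrArg Subtype.val hc

theorem ncard_edgeSet_le_of_isStrongEdgeColoring
    (hnear : ∀ e ∈ G.edgeSet, ∀ f ∈ G.edgeSet, NearEdges G e f) {c : Sym2 V → ℕ} {k : ℕ}
    (hlt : ∀ e ∈ G.edgeSet, c e < k) (hc : IsStrongEdgeColoring G c) :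
    G.edgeSet.ncard ≤ k := by
  have hinj : Set.InjOn c G.edgeSet := fun e he f hf hcef =>
    of_not_not fun hef => hc e he f hf hef (hnear e he f hf) hcef
  simpa using Set.ncard_le_ncard_of_injOn c (fun e he => Set.mem_Iio.2 (hlt e he)) hinj

theorem strongChromIndex_eq_ncard_edgeSet (hfin : G.edgeSet.Finite)
    (hnear : ∀ e ∈ G.edgeSet, ∀ f ∈ G.edgeSet, NearEdges G e f) :
    strongChromIndex G = G.edgeSet.ncard := by
  have hmem := exists_isStrongEdgeColoring_lt_ncard hfin
  refine (Nat.sInf_le hmem).antisymm (le_csInf ⟨_, hmem⟩ ?_)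
  rintro k ⟨c, hlt, hc⟩
  exact ncard_edgeSet_le_of_isStrongEdgeColoring hnear hlt hc

end StrongChromaticIndex

theorem SimpleGraph.sum_ncard_neighborSet_eq_two_mul_ncard_edgeSet {V : Type*} [Fintype V]
    (G : SimpleGraph V) : ∑ v, (G.neighborSet v).ncard = 2 * G.edgeSet.ncard := by
  classical
  rw [← G.coe_edgeFinset, Set.ncard_coe_finset, ← G.sum_degrees_eq_twice_card_edges]
  refine Finset.sum_congr rfl fun v _ => ?_
  rw [← G.card_neighborSet_eq_degree, ← Nat.card_eq_fintype_card, Nat.card_coe_set_eq]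

namespace HGraph

variable {Δ : ℕ}

theorem adj_inl_inl (i j : Fin 5) : (HGraph Δ).Adj (.inl i) (.inl j) ↔ i ≠ j := by
  simp [HGraph]

theorem adj_inl_inr (i : Fin 5) (p : Fin 5 × Fin (Δ - 4)) :
    (HGraph Δ).Adj (.inl i) (.inr p) ↔ p.1 = i := by
  obtain ⟨j, t⟩ := p
  simp [HGraph, eq_comm]

theorem not_adj_inr_inr (p q : Fin 5 × Fin (Δ - 4)) : ¬(HGraph Δ).Adj (.inr p) (.inr q) := by
  simp [HGraph]

theorem isClique_range_inl : (HGraph Δ).IsClique (Set.range Sum.inl) := by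
  rintro _ ⟨i, rfl⟩ _ ⟨j, rfl⟩ hij
  exact (adj_inl_inl i j).2 fun h => hij (congrArg Sum.inl h)

theorem exists_inl_mem_of_mem_edgeSet {e : Sym2 (Fin 5 ⊕ Fin 5 × Fin (Δ - 4))}
    (he : e ∈ (HGraph Δ).edgeSet) : ∃ v ∈ Set.range Sum.inl, v ∈ e := by
  induction e with
  | h x y =>
    rcases x with i | p
    · exact ⟨_, ⟨i, rfl⟩, Sym2.mem_mk_left _ _⟩
    rcases y with j | q
    · exact ⟨_, ⟨j, rfl⟩, Sym2.mem_mk_right _ _⟩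
    · exact absurd he (not_adj_inr_inr p q)

theorem nearEdges {e f : Sym2 (Fin 5 ⊕ Fin 5 × Fin (Δ - 4))}
    (he : e ∈ (HGraph Δ).edgeSet) (hf : f ∈ (HGraph Δ).edgeSet) : NearEdges (HGraph Δ) e f :=
  nearEdges_of_isClique isClique_range_inl (fun _ => exists_inl_mem_of_mem_edgeSet) he hf

theorem neighborSet_inl (i : Fin 5) :
    (HGraph Δ).neighborSet (.inl i) = Sum.inl '' {i}ᶜ ∪ Sum.inr '' ({i} ×ˢ Set.univ) := by
  ext (j | p)
  · simp [adj_inl_inl, ne_comm]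
  · simp [adj_inl_inr]

theorem neighborSet_inr (p : Fin 5 × Fin (Δ - 4)) :
    (HGraph Δ).neighborSet (.inr p) = {.inl p.1} := by
  ext (j | q)
  · simp [SimpleGraph.adj_comm, adj_inl_inr, eq_comm]
  · simp [not_adj_inr_inr]

theorem ncard_neighborSet_inl (hΔ : 4 ≤ Δ) (i : Fin 5) :
    ((HGraph Δ).neighborSet (.inl i)).ncard = Δ := by
  rw [neighborSet_inl, Set.ncard_union_eq Set.disjoint_image_inl_image_inr,
    Set.ncard_image_of_injective _ Sum.inl_injective,
    Set.ncard_image_of_injective _ Sum.inr_injective, Set.ncard_compl, Set.ncard_prod]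
  simp only [Set.ncard_singleton, Set.ncard_univ, Nat.card_eq_fintype_card, Fintype.card_fin,
    one_mul]
  omega

theorem ncard_neighborSet_inr (p : Fin 5 × Fin (Δ - 4)) :
    ((HGraph Δ).neighborSet (.inr p)).ncard = 1 := by
  rw [neighborSet_inr, Set.ncard_singleton]

theorem ncard_edgeSet (hΔ : 4 ≤ Δ) : (HGraph Δ).edgeSet.ncard = 5 * Δ - 10 := by
  have hsum := (HGraph Δ).sum_ncard_neighborSet_eq_two_mul_ncard_edgeSet
  simp only [Fintype.sum_sum_type, ncard_neighborSet_inl hΔ, ncard_neighborSet_inr,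
    Finset.sum_const, Finset.card_univ, Fintype.card_fin, Fintype.card_prod, smul_eq_mul,
    mul_one] at hsum
  omega

end HGraph

/-- For `Δ ≥ 4`, the graph `H_Δ` has maximum degree `Δ`, any two of its edges
are at distance at most 2, and `χ'ₛ(H_Δ) = |E(H_Δ)| = 5Δ − 10`. -/
theorem stmt_13 (Δ : ℕ) (hΔ : 4 ≤ Δ) :
    (∀ v, ((HGraph Δ).neighborSet v).ncard ≤ Δ) ∧
    (∃ v, ((HGraph Δ).neighborSet v).ncard = Δ) ∧
    (∀ e ∈ (HGraph Δ).edgeSet, ∀ f ∈ (HGraph Δ).edgeSet, NearEdges (HGraph Δ) e f) ∧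
    (HGraph Δ).edgeSet.ncard = 5 * Δ - 10 ∧
    strongChromIndex (HGraph Δ) = 5 * Δ - 10 := by
  have hnear : ∀ e ∈ (HGraph Δ).edgeSet, ∀ f ∈ (HGraph Δ).edgeSet, NearEdges (HGraph Δ) e f :=
    fun _ he _ hf => HGraph.nearEdges he hf
  refine ⟨?_, ⟨.inl 0, HGraph.ncard_neighborSet_inl hΔ 0⟩, hnear, HGraph.ncard_edgeSet hΔ, ?_⟩
  · rintro (i | p)
    · exact (HGraph.ncard_neighborSet_inl hΔ i).le
    · rw [HGraph.ncard_neighborSet_inr]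
      omega
  · rw [strongChromIndex_eq_ncard_edgeSet (Set.toFinite _) hnear, HGraph.ncard_edgeSet hΔ]
end
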